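/- Let (G,P) be a quasi-lattice ordered group. For every Ω ∈ B_P and every p ∈ Ω, there exists a finite subset J ⊆ P∖{e} such that p ∈ pΩ_J ⊆ Ω. -/

import Mathlib

/-- The order on `G` induced by the submonoid `P`: `g ≤ h` iff `g⁻¹ * h ∈ P`. -/
def QLe {G : Type*} [Group G] (P : Submonoid G) (g h : G) : Prop := g⁻¹ * h ∈ P

/-- `u` is the least upper bound of `g` and `h` with respect to `QLe P`. -/
def QLub {G : Type*} [Group G] (P : Submonoid G) (g h u : G) : Prop :=
  QLe P g u ∧ QLe P h u ∧ ∀ v, QLe P g v → QLe P h v → QLe P u v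

/-- `(G, P)` is a quasi-lattice ordered group. -/
structure QuasiLatticeOrdered {G : Type*} [Group G] (P : Submonoid G) : Prop where
  gen : Subgroup.closure (P : Set G) = ⊤
  cap : ∀ g ∈ P, g⁻¹ ∈ P → g = 1
  lub : ∀ g h : G, (∃ u, QLe P g u ∧ QLe P h u) → ∃ u, QLub P g h u

/-- Membership in the algebra `B_P` of subsets of `P` generated by the sets
`pP = {x | p⁻¹ x ∈ P}`, `p ∈ P`: the smallest collection of subsets containing the sets
`pP` and closed under complements in `P`, finite unions and finite intersections. -/
inductive MemBP {G : Type*} [Group G] (P : Submonoid G) : Set G → Prop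
  | basic (p : G) (hp : p ∈ P) : MemBP P {x | QLe P p x}
  | compl (Ω : Set G) : MemBP P Ω → MemBP P ((P : Set G) \ Ω)
  | union (Ω₁ Ω₂ : Set G) : MemBP P Ω₁ → MemBP P Ω₂ → MemBP P (Ω₁ ∪ Ω₂)
  | inter (Ω₁ Ω₂ : Set G) : MemBP P Ω₁ → MemBP P Ω₂ → MemBP P (Ω₁ ∩ Ω₂)

/-- For a finite set `J ⊆ P \ {e}`, `Ω_J = ⋂_{q ∈ J} (P \ qP)`
(with the convention `Ω_∅ = P`). -/
def OmegaJ {G : Type*} [Group G] (P : Submonoid G) (J : Finset G) : Set G :=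
  (P : Set G) ∩ ⋂ q ∈ J, {x | QLe P q x}ᶜ

/-!
Fix `p ∈ P`. The sets `p·Ω_J`, for finite `J ⊆ P \ {e}`, form a filter basis
(`Ω_J ∩ Ω_K = Ω_{J ∪ K}`), and each of them contains `p` because `e ∈ Ω_J`. It suffices to
show that every `Ω ∈ B_P` is eventually constant along this filter, i.e. contains or misses
some `p·Ω_J` entirely. Being eventually constant is preserved by Boolean operations, and `P`
itself is eventually constant, so only the generators `qP` need an argument: if `p ∉ qP` and
`u = p ∨ q` exists, then `p·Ω_{p⁻¹u}` misses `qP`, since `pw ∈ qP` with `w ∈ P` forces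
`u ≤ pw`; if `p ∨ q = ∞`, all of `pP` misses `qP`.
-/

open Filter

section QuasiLatticeOrder

variable {G : Type*} [Group G] {P : Submonoid G}

lemma qLe_mul_left_iff {g a b : G} : QLe P (g * a) (g * b) ↔ QLe P a b := by
  simp [QLe, mul_assoc]

lemma QLe.trans {a b c : G} (hab : QLe P a b) (hbc : QLe P b c) : QLe P a c := by
  simpa [QLe, mul_assoc] using mul_mem hab hbc

lemma qLe_mul_self {g w : G} (hw : w ∈ P) : QLe P g (g * w) := by
  simpa [QLe] using hw

lemma one_qLe_iff {g : G} : QLe P 1 g ↔ g ∈ P := by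
  simp [QLe]

lemma MemBP.subset {Ω : Set G} (hΩ : MemBP P Ω) : Ω ⊆ P := by
  induction hΩ with
  | basic q hq => exact fun x hx => one_qLe_iff.1 ((one_qLe_iff.2 hq).trans hx)
  | compl _ _ _ => exact Set.sdiff_subset
  | union _ _ _ _ ih₁ ih₂ => exact Set.union_subset ih₁ ih₂
  | inter _ _ _ _ ih₁ _ => exact Set.inter_subset_left.trans ih₁

lemma mem_omegaJ {J : Finset G} {w : G} :
    w ∈ OmegaJ P J ↔ w ∈ P ∧ ∀ q ∈ J, ¬QLe P q w := by
  simp [OmegaJ]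

lemma omegaJ_anti : Antitone (OmegaJ P) := fun _ _ hJ _ hw =>
  mem_omegaJ.2 ⟨(mem_omegaJ.1 hw).1, fun q hq => (mem_omegaJ.1 hw).2 q (hJ hq)⟩

lemma one_mem_omegaJ (hcap : ∀ g ∈ P, g⁻¹ ∈ P → g = 1) {J : Finset G}
    (hJ : ↑J ⊆ (P : Set G) \ {1}) : (1 : G) ∈ OmegaJ P J := by
  refine mem_omegaJ.2 ⟨one_mem P, fun q hq hq1 => (hJ hq).2 (hcap q (hJ hq).1 ?_)⟩
  simpa [QLe] using hq1

variable (P) in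
def omegaNhds (p : G) : Filter G :=
  ⨅ (J : Finset G) (_ : ↑J ⊆ (P : Set G) \ {1}), 𝓟 ((p * ·) '' OmegaJ P J)

variable (P) in
lemma hasBasis_omegaNhds (p : G) :
    (omegaNhds P p).HasBasis (fun J : Finset G => ↑J ⊆ (P : Set G) \ {1})
      fun J => (p * ·) '' OmegaJ P J := by
  classical
  refine hasBasis_biInf_principal' (fun J hJ K hK => ⟨J ∪ K, ?_, ?_, ?_⟩) ⟨∅, by simp⟩
  · rw [Finset.coe_union]
    exact Set.union_subset hJ hK
  · exact Set.image_mono (omegaJ_anti Finset.subset_union_left)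
  · exact Set.image_mono (omegaJ_anti Finset.subset_union_right)

lemma eventually_omegaNhds_iff {p : G} {r : G → Prop} :
    (∀ᶠ x in omegaNhds P p, r x) ↔
      ∃ J : Finset G, ↑J ⊆ (P : Set G) \ {1} ∧ ∀ w ∈ OmegaJ P J, r (p * w) := by
  simp only [(hasBasis_omegaNhds P p).eventually_iff, Set.forall_mem_image]

lemma eventually_mem_omegaNhds {p : G} (hp : p ∈ P) : ∀ᶠ x in omegaNhds P p, x ∈ P :=
  eventually_omegaNhds_iff.2 ⟨∅, by simp, fun w hw => mul_mem hp (mem_omegaJ.1 hw).1⟩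

lemma eventuallyConst_qLe_omegaNhds
    (hlub : ∀ g h : G, (∃ u, QLe P g u ∧ QLe P h u) → ∃ u, QLub P g h u) (p q : G) :
    EventuallyConst {x | QLe P q x} (omegaNhds P p) := by
  rw [eventuallyConst_set]
  by_cases hqp : QLe P q p
  · exact Or.inl <| eventually_omegaNhds_iff.2
      ⟨∅, by simp, fun w hw => hqp.trans (qLe_mul_self (mem_omegaJ.1 hw).1)⟩
  refine Or.inr <| eventually_omegaNhds_iff.2 ?_
  by_cases hbdd : ∃ u, QLe P p u ∧ QLe P q u
  · obtain ⟨u, hpu, hqu, hleast⟩ := hlub p q hbdd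
    have hu : p⁻¹ * u ≠ 1 := fun h => hqp (by rwa [← inv_mul_eq_one.1 h] at hqu)
    refine ⟨{p⁻¹ * u}, by simpa using ⟨hpu, hu⟩, fun w hw hqw => ?_⟩
    have hupw : QLe P u (p * w) := hleast _ (qLe_mul_self (mem_omegaJ.1 hw).1) hqw
    rw [← mul_inv_cancel_left p u, qLe_mul_left_iff] at hupw
    exact (mem_omegaJ.1 hw).2 _ (Finset.mem_singleton_self _) hupw
  · exact ⟨∅, by simp, fun w hw hqw =>
      hbdd ⟨p * w, qLe_mul_self (mem_omegaJ.1 hw).1, hqw⟩⟩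

lemma MemBP.eventuallyConst_omegaNhds
    (hlub : ∀ g h : G, (∃ u, QLe P g u ∧ QLe P h u) → ∃ u, QLub P g h u)
    {p : G} (hp : p ∈ P) {Ω : Set G} (hΩ : MemBP P Ω) :
    EventuallyConst Ω (omegaNhds P p) := by
  induction hΩ with
  | basic q _ => exact eventuallyConst_qLe_omegaNhds hlub p q
  | compl _ _ ih =>
    exact (eventuallyConst_set.2 (Or.inl (eventually_mem_omegaNhds hp))).comp₂ (· ∧ ¬·) ih
  | union _ _ _ _ ih₁ ih₂ => exact ih₁.comp₂ (· ∨ ·) ih₂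
  | inter _ _ _ _ ih₁ ih₂ => exact ih₁.comp₂ (· ∧ ·) ih₂

end QuasiLatticeOrder

/-- For every `Ω ∈ B_P` and `p ∈ Ω` there is a finite `J ⊆ P \ {e}` with
`p ∈ p·Ω_J ⊆ Ω`. -/
theorem stmt4 {G : Type*} [Group G] (P : Submonoid G) (hQL : QuasiLatticeOrdered P)
    (Ω : Set G) (hΩ : MemBP P Ω) (p : G) (hp : p ∈ Ω) :
    ∃ J : Finset G, ↑J ⊆ (P : Set G) \ {1} ∧
      p ∈ (p * ·) '' OmegaJ P J ∧ (p * ·) '' OmegaJ P J ⊆ Ω := by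
  have hp_mem : ∀ J : Finset G, ↑J ⊆ (P : Set G) \ {1} → p ∈ (p * ·) '' OmegaJ P J :=
    fun _ hJ => ⟨1, one_mem_omegaJ hQL.cap hJ, mul_one p⟩
  obtain ⟨J, hJ, hconst⟩ := ((hasBasis_omegaNhds P p).eventuallyConst_iff' hp_mem).1
    (hΩ.eventuallyConst_omegaNhds hQL.lub (hΩ.subset hp))
  exact ⟨J, hJ, hp_mem J hJ, fun y hy => (hconst y hy).mpr hp⟩
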